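/- arXiv:2605.11200 — 5 statements merged into one kernel-verified Lean document; each statement's English description precedes it below -/
import Mathlib

section
/- Under the factive package (M monotone and factive, ◇_M monotone) with the Risk Management and Risk Reach Principles, for every p ∈ Risk(S) the anti-Moorean refinement satisfies p ∧ M¬p ≤ ◇_M I_M(p) ≤ ◇_M I_M, where I_M(p) = Mp ∧ M¬p is epistemic inconsistency and I_M(w) = sup_q I_M(q)(w). -/
open unitInterval

instance : Fact ((0:ℝ) ≤ 1) := ⟨zero_le_one⟩
noncomputable instance : CompleteLattice unitInterval := Set.Icc.completeLattice

/-- Negation of a graded proposition: `(¬p)(w) = 1 - p(w)`. -/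
noncomputable def negP {W : Type*} (p : W → unitInterval) : W → unitInterval :=
  fun w => σ (p w)

/-- Epistemic inconsistency of `p` under `M`: `I_M(p) = Mp ⊓ M¬p`. -/
noncomputable def incons {W : Type*}
    (M : (W → unitInterval) → (W → unitInterval))
    (p : W → unitInterval) : W → unitInterval :=
  M p ⊓ M (negP p)

/-- Global epistemic inconsistency: `I_M(w) = ⨆_q I_M(q)(w)`. -/
noncomputable def globalIncons {W : Type*}
    (M : (W → unitInterval) → (W → unitInterval)) : W → unitInterval :=
  fun w => ⨆ q : W → unitInterval, incons M q w

/-- Anti-Moorean bound under the factive package: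
`p ∧ M¬p ≤ ◇ I_M(p) ≤ ◇ I_M`. -/
theorem factive_conflict_bound {W : Type*}
    (M Dia : (W → unitInterval) → (W → unitInterval))
    (Risk : Set (W → unitInterval))
    (hMmono : ∀ p q, p ≤ q → M p ≤ M q)
    (hMfact : ∀ p, M p ≤ p)
    (hDmono : ∀ p q, p ≤ q → Dia p ≤ Dia q)
    (hRMP : ∀ p ∈ Risk, p ⊓ M (negP p) ∈ Risk)
    (hRRP : ∀ q ∈ Risk, q ≤ Dia (M q)) :
    ∀ p ∈ Risk,
      p ⊓ M (negP p) ≤ Dia (incons M p) ∧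
      Dia (incons M p) ≤ Dia (globalIncons M) := by
  intro p hp
  set r := p ⊓ M (negP p) with hr
  have hrRisk := hRMP p hp
  have h1 : M r ≤ incons M p := by
    refine le_inf ?_ ?_
    · exact hMmono r p inf_le_left
    · exact le_trans (hMfact r) inf_le_right
  constructor
  · exact le_trans (hRRP r hrRisk) (hDmono _ _ h1)
  · refine hDmono _ _ ?_
    intro w
    exact le_iSup (fun q => incons M q w) p
end

section
/- Let M be a monotone operator satisfying positive introspection (Mp ≤ MMp). Then for every proposition p, M(p ∧ ¬Mp) ≤ MMp ∧ M¬Mp = I_M(Mp), and hence M(p ∧ ¬Mp) ≤ I_M. -/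
open unitInterval

/-- Internal non-factive (belief) pressure: if `M` is monotone and positively
introspective, then `M(p ∧ ¬Mp) ≤ MMp ⊓ M¬Mp = I_M(Mp) ≤ I_M`. -/
theorem belief_internal_pressure {W : Type*}
    (M : (W → unitInterval) → (W → unitInterval))
    (hMmono : ∀ p q, p ≤ q → M p ≤ M q)
    (hPI : ∀ p, M p ≤ M (M p)) :
    ∀ p : W → unitInterval,
      M (p ⊓ negP (M p)) ≤ M (M p) ⊓ M (negP (M p)) ∧
      M (M p) ⊓ M (negP (M p)) = incons M (M p) ∧
      M (p ⊓ negP (M p)) ≤ globalIncons M := by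
  intro p
  have h1 : M (p ⊓ negP (M p)) ≤ M (M p) ⊓ M (negP (M p)) := by
    refine le_inf ?_ ?_
    · exact le_trans (hMmono _ _ inf_le_left) (hPI p)
    · exact hMmono _ _ inf_le_right
  refine ⟨h1, rfl, ?_⟩
  intro w
  exact le_trans (h1 w) (le_iSup (fun q => incons M q w) (M p))
end

section
/- Let M be monotone and positively introspective and let ◇_M be monotone. If the Risk Management Principle (p ∈ Risk(S) implies p ∧ ¬Mp ∈ Risk(S)) and the Risk Reach Principle (q ∈ Risk(S) implies q ≤ ◇_M(Mq)) hold, then for every p ∈ Risk(S), p ∧ ¬Mp ≤ ◇_M I_M(Mp) ≤ ◇_M I_M. -/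
open unitInterval

/-- Non-factive reach theorem: for `p ∈ Risk`,
`p ∧ ¬Mp ≤ ◇ I_M(Mp) ≤ ◇ I_M`. -/
theorem belief_reach {W : Type*}
    (M Dia : (W → unitInterval) → (W → unitInterval))
    (Risk : Set (W → unitInterval))
    (hMmono : ∀ p q, p ≤ q → M p ≤ M q)
    (hPI : ∀ p, M p ≤ M (M p))
    (hDmono : ∀ p q, p ≤ q → Dia p ≤ Dia q)
    (hRMP : ∀ p ∈ Risk, p ⊓ negP (M p) ∈ Risk)
    (hRRP : ∀ q ∈ Risk, q ≤ Dia (M q)) :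
    ∀ p ∈ Risk,
      p ⊓ negP (M p) ≤ Dia (incons M (M p)) ∧
      Dia (incons M (M p)) ≤ Dia (globalIncons M) := by
  intro p hp
  set q := p ⊓ negP (M p) with hq
  have hqRisk : q ∈ Risk := hRMP p hp
  have hMq : M q ≤ incons M (M p) := by
    apply le_inf
    · exact le_trans (hMmono _ _ inf_le_left) (hPI p)
    · exact hMmono _ _ inf_le_right
  constructor
  · exact le_trans (hRRP q hqRisk) (hDmono _ _ hMq)
  · apply hDmono
    intro w
    exact le_iSup (fun r => incons M r w) (M p)
end

section
/- Let M be monotone and positively introspective, ◇_M monotone with ◇_M 0 = 0, and suppose conjunction separation holds (p ∧ ¬q ≤ 0 implies p ≤ q), together with the Risk Management and Risk Reach Principles. If global epistemic inconsistency I_M equals 0, then p ∧ ¬Mp ≤ 0 and consequently p ≤ Mp for every p ∈ Risk(S). -/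
open unitInterval

/-- Belief collapse: if global epistemic inconsistency is `0`, then every
risk `p` satisfies `p ∧ ¬Mp ≤ 0` and hence `p ≤ Mp`. -/
theorem belief_collapse {W : Type*}
    (M Dia : (W → unitInterval) → (W → unitInterval))
    (Risk : Set (W → unitInterval))
    (hMmono : ∀ p q, p ≤ q → M p ≤ M q)
    (hPI : ∀ p, M p ≤ M (M p))
    (hDmono : ∀ p q, p ≤ q → Dia p ≤ Dia q)
    (hBot : Dia (fun _ => (0 : unitInterval)) = fun _ => (0 : unitInterval))
    (hSep : ∀ p q : W → unitInterval,
      p ⊓ negP q ≤ (fun _ => (0 : unitInterval)) → p ≤ q)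
    (hRMP : ∀ p ∈ Risk, p ⊓ negP (M p) ∈ Risk)
    (hRRP : ∀ q ∈ Risk, q ≤ Dia (M q))
    (hI : globalIncons M = fun _ => (0 : unitInterval)) :
    ∀ p ∈ Risk,
      p ⊓ negP (M p) ≤ (fun _ => (0 : unitInterval)) ∧ p ≤ M p := by
  intro p hp
  set r := p ⊓ negP (M p) with hr
  have hrRisk : r ∈ Risk := hRMP p hp
  -- M r ≤ incons M (M p)
  have h1 : M r ≤ M (M p) := le_trans (hMmono _ _ (le_trans inf_le_left (le_refl p)) |>.trans (hPI p)) (le_refl _)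
  have h2 : M r ≤ M (negP (M p)) := hMmono _ _ inf_le_right
  have hMr0 : M r ≤ fun _ => (0 : unitInterval) := by
    intro w
    have : M r w ≤ incons M (M p) w := le_inf (h1 w) (h2 w)
    have hle : incons M (M p) w ≤ globalIncons M w := le_iSup (fun q => incons M q w) (M p)
    calc M r w ≤ globalIncons M w := this.trans hle
      _ = 0 := by rw [hI]
  have hM0 : M r = fun _ => (0 : unitInterval) :=
    le_antisymm hMr0 (fun w => (M r w).2.1)
  have hr0 : r ≤ fun _ => (0 : unitInterval) := by
    have := hRRP r hrRisk
    rw [hM0, hBot] at this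
    exact this
  exact ⟨hr0, hSep p (M p) hr0⟩
end

section
/- Let ⊗ be a left-continuous t-norm with residuum ⇒ (so a ⊗ b ≤ c iff a ≤ (b ⇒ c)). If γ is ⊗-transitive, i.e. γ(w,u) ⊗ γ(u,v) ≤ γ(w,v) for all w,u,v, then the operator (Mp)(w) = inf_v (γ(w,v) ⇒ p(v)) satisfies positive introspection: Mp ≤ MMp pointwise. -/
open unitInterval

/-- If `⊗` is a t-norm with residuum `⇒` (adjunction: `a ⊗ b ≤ c ↔ a ≤ b ⇒ c`)
and `γ` is `⊗`-transitive, then `(Mp)(w) = ⨅_v (γ(w,v) ⇒ p(v))` satisfies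
positive introspection `Mp ≤ MMp`. -/
theorem fuzzy_positive_introspection {W : Type*}
    (γ : W → W → unitInterval)
    (tnorm impl : unitInterval → unitInterval → unitInterval)
    (hComm : ∀ a b, tnorm a b = tnorm b a)
    (hAssoc : ∀ a b c, tnorm (tnorm a b) c = tnorm a (tnorm b c))
    (hMono : ∀ a a' b b', a ≤ a' → b ≤ b' → tnorm a b ≤ tnorm a' b')
    (hUnit : ∀ a, tnorm 1 a = a)
    (hAdj : ∀ a b c, tnorm a b ≤ c ↔ a ≤ impl b c)
    (hTrans : ∀ w u v, tnorm (γ w u) (γ u v) ≤ γ w v) :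
    ∀ (p : W → unitInterval) (w : W),
      (⨅ v, impl (γ w v) (p v)) ≤
        ⨅ u, impl (γ w u) (⨅ v, impl (γ u v) (p v)) := by
  intro p w
  set M := ⨅ v, impl (γ w v) (p v) with hM
  refine le_iInf fun u => ?_
  rw [← hAdj]
  refine le_iInf fun v => ?_
  rw [← hAdj, hAssoc]
  calc tnorm M (tnorm (γ w u) (γ u v))
      ≤ tnorm M (γ w v) := hMono _ _ _ _ le_rfl (hTrans w u v)
    _ ≤ p v := (hAdj _ _ _).mpr (iInf_le _ v)
end
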